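/- arXiv:2210.17266 — 2 statements merged into one kernel-verified Lean document; each statement's English description precedes it below -/
import Mathlib

section
/- Let q ∈ L¹(0,1), ρ ∈ ℂ nonzero, ω = ∫₀¹ q(t) dt, and Q(1,λ) = ∫₀¹ (sin ρ(1-t)/ρ) q(t) (sin ρt/ρ) dt. Define u⁺(x) = (q((1+x)/2) + q((1-x)/2))/4. Then Q(1,λ) = ∫₀¹ u⁺(x) (cos ρx / ρ²) dx - ω cos ρ / (2ρ²). -/
open MeasureTheory intervalIntegral

noncomputable def uplus (q : ℝ → ℂ) (x : ℝ) : ℂ := (q ((1 + x) / 2) + q ((1 - x) / 2)) / 4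

/-!
By the product-to-sum formula, `sin ρ(1-t) · sin ρt = (cos ρ(1-2t) - cos ρ) / 2`. The `cos ρ` part
integrates to `ω cos ρ`. In the other part, the substitutions `t = (1 + x)/2` on `[1/2, 1]` and
`t = (1 - x)/2` on `[0, 1/2]` both turn `cos ρ(1-2t)` into `cos ρx`, and together they turn `q` into
`4 u⁺`.
-/

theorem Complex.two_mul_sin_mul_sin (x y : ℂ) :
    2 * Complex.sin x * Complex.sin y = Complex.cos (x - y) - Complex.cos (x + y) := by
  simp only [Complex.cos_add, Complex.cos_sub]
  ring

section

variable {E : Type*} [NormedAddCommGroup E]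

theorem IntervalIntegrable.comp_mul_add {f : ℝ → E} {a b : ℝ}
    (hf : IntervalIntegrable f volume a b) (c d : ℝ) :
    IntervalIntegrable (fun x ↦ f (c * x + d)) volume ((a - d) / c) ((b - d) / c) :=
  (hf.comp_add_right d).comp_mul_left

theorem intervalIntegral.integral_symmetrize_unitInterval [NormedSpace ℝ E] {f : ℝ → E}
    (hf : IntervalIntegrable f volume 0 1) :
    ∫ x in (0 : ℝ)..1, (f ((1 + x) / 2) + f ((1 - x) / 2)) = (2 : ℝ) • ∫ t in (0 : ℝ)..1, f t := by
  have hsub : Set.uIcc (0 : ℝ) 1 ⊆ Set.uIcc (-1) 1 :=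
    Set.uIcc_subset_uIcc_right (by norm_num [Set.mem_uIcc])
  have hplus : IntervalIntegrable (fun x ↦ f ((1 + x) / 2)) volume 0 1 := by
    have h := hf.comp_mul_add (1 / 2) (1 / 2)
    norm_num at h
    convert h.mono_set hsub using 2 with x
    ring_nf
  have hminus : IntervalIntegrable (fun x ↦ f ((1 - x) / 2)) volume 0 1 := by
    have h := hf.comp_mul_add (-1 / 2) (1 / 2)
    norm_num at h
    convert h.symm.mono_set hsub using 2 with x
    ring_nf
  have hhalf : (1 / 2 : ℝ) ∈ Set.uIcc 0 1 := by norm_num [Set.mem_uIcc]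
  rw [integral_add hplus hminus, ← integral_add_adjacent_intervals
    (hf.mono_set (Set.uIcc_subset_uIcc_left hhalf)) (hf.mono_set (Set.uIcc_subset_uIcc_right hhalf))]
  simp only [add_div, sub_div, integral_comp_add_div f two_ne_zero,
    integral_comp_sub_div f two_ne_zero]
  norm_num
  exact add_comm _ _

end

theorem stmt3_general (q : ℝ → ℂ) (hq : IntervalIntegrable q volume 0 1)
    (ρ : ℂ) :
    (∫ t in (0 : ℝ)..1, (Complex.sin (ρ * (1 - ↑t)) / ρ) * q t * (Complex.sin (ρ * ↑t) / ρ))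
      = (∫ x in (0 : ℝ)..1, uplus q x * (Complex.cos (ρ * ↑x) / ρ ^ 2))
        - (∫ t in (0 : ℝ)..1, q t) * Complex.cos ρ / (2 * ρ ^ 2) := by
  set f : ℝ → ℂ := fun t ↦ q t * Complex.cos (ρ * (1 - 2 * t)) with hf_def
  have hf : IntervalIntegrable f volume 0 1 := hq.mul_continuousOn (by fun_prop)
  have hsin (t : ℝ) : Complex.sin (ρ * (1 - t)) / ρ * q t * (Complex.sin (ρ * t) / ρ)
      = (f t - q t * Complex.cos ρ) / (2 * ρ ^ 2) := by
    have h := Complex.two_mul_sin_mul_sin (ρ * (1 - t)) (ρ * t)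
    rw [show ρ * (1 - t) - ρ * t = ρ * (1 - 2 * t) by ring,
      show ρ * (1 - t) + ρ * t = ρ by ring] at h
    linear_combination q t / (2 * ρ ^ 2) * h
  have hcos (x : ℝ) : uplus q x * (Complex.cos (ρ * x) / ρ ^ 2)
      = (f ((1 + x) / 2) + f ((1 - x) / 2)) / (4 * ρ ^ 2) := by
    have h₁ : ρ * (1 - 2 * (((1 + x) / 2 : ℝ) : ℂ)) = -(ρ * x) := by push_cast; ring
    have h₂ : ρ * (1 - 2 * (((1 - x) / 2 : ℝ) : ℂ)) = ρ * x := by push_cast; ring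
    simp only [hf_def, uplus, h₁, h₂, Complex.cos_neg]
    ring
  simp only [hsin, hcos]
  rw [intervalIntegral.integral_div, intervalIntegral.integral_div,
    integral_sub hf (hq.mul_const _), intervalIntegral.integral_mul_const,
    integral_symmetrize_unitInterval hf, two_smul]
  ring

theorem stmt3 (q : ℝ → ℂ) (hq : IntervalIntegrable q volume 0 1)
    (ρ : ℂ) (hρ : ρ ≠ 0) :
    (∫ t in (0 : ℝ)..1, (Complex.sin (ρ * (1 - ↑t)) / ρ) * q t * (Complex.sin (ρ * ↑t) / ρ))
      = (∫ x in (0 : ℝ)..1, uplus q x * (Complex.cos (ρ * ↑x) / ρ ^ 2))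
        - (∫ t in (0 : ℝ)..1, q t) * Complex.cos ρ / (2 * ρ ^ 2) :=
  stmt3_general q hq ρ
end

section
/- Let q₂, q₃ ∈ L²(0,1) and for k = 1,2 define w_k(x) = (1/2)(u_{k+1}⁺ + u_{4-k}⁻)(1-x) for x ∈ (0,1) and w_k(x) = (1/2)(u_{k+1}⁺ - u_{4-k}⁻)(x-1) for x ∈ (1,2), where u_j^±(x) = (q_j((1+x)/2) ± q_j((1-x)/2))/4. Then a.e. on (0,1): q₂(x) = 2(w₁-w₂)(2x) + 2(w₁+w₂)(2-2x) and q₃(x) = 2(w₂-w₁)(2x) + 2(w₁+w₂)(2-2x). Consequently, the map (q₂,q₃) ↦ (w₁,w₂) from L²(0,1)² to L²(0,2)² is injective. -/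
open MeasureTheory

noncomputable def uminus (q : ℝ → ℂ) (x : ℝ) : ℂ := (q ((1 + x) / 2) - q ((1 - x) / 2)) / 4

/-- `w₁` built from the potentials `q₂, q₃` (Lemma 2). -/
noncomputable def w1 (q₂ q₃ : ℝ → ℂ) (x : ℝ) : ℂ :=
  if x < 1 then (uplus q₂ (1 - x) + uminus q₃ (1 - x)) / 2
  else (uplus q₂ (x - 1) - uminus q₃ (x - 1)) / 2

/-- `w₂` built from the potentials `q₂, q₃` (Lemma 2). -/
noncomputable def w2 (q₂ q₃ : ℝ → ℂ) (x : ℝ) : ℂ :=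
  if x < 1 then (uplus q₃ (1 - x) + uminus q₂ (1 - x)) / 2
  else (uplus q₃ (x - 1) - uminus q₂ (x - 1)) / 2

/-! Since `uplus q` is even and `uminus q` odd, the two branches of `w1` (and of `w2`) glue into
the single formula `w1 (1 + t) = (uplus q₂ t - uminus q₃ t) / 2` on all of `ℝ`. With `x = (1 + t) / 2`
the points `2x` and `2 - 2x` are `1 + t` and `1 - t`, and the combinations in the statement collapse to
`2 (uplus q₂ t + uminus q₂ t) = q₂ x`. Injectivity follows because `x ↦ 2x` and `x ↦ 2 - 2x` map
`(0, 1)` into `(0, 2)` and pull null sets back to null sets. -/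

open Set Filter

lemma uplus_neg (q : ℝ → ℂ) (t : ℝ) : uplus q (-t) = uplus q t := by
  rw [uplus, uplus, sub_neg_eq_add, ← sub_eq_add_neg, add_comm (q _)]

lemma uminus_neg (q : ℝ → ℂ) (t : ℝ) : uminus q (-t) = -uminus q t := by
  simp only [uminus, sub_neg_eq_add, ← sub_eq_add_neg]
  ring

section Reconstruction

variable (q₂ q₃ : ℝ → ℂ)

lemma w1_swap : w1 q₃ q₂ = w2 q₂ q₃ := rfl

lemma w2_swap : w2 q₃ q₂ = w1 q₂ q₃ := rfl

lemma w1_one_add (t : ℝ) : w1 q₂ q₃ (1 + t) = (uplus q₂ t - uminus q₃ t) / 2 := by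
  by_cases ht : 1 + t < 1
  · rw [w1, if_pos ht, show 1 - (1 + t) = -t by ring, uplus_neg, uminus_neg, sub_eq_add_neg]
  · rw [w1, if_neg ht, add_sub_cancel_left]

lemma apply_eq_w_combination (x : ℝ) :
    q₂ x = 2 * (w1 q₂ q₃ (2 * x) - w2 q₂ q₃ (2 * x))
      + 2 * (w1 q₂ q₃ (2 - 2 * x) + w2 q₂ q₃ (2 - 2 * x)) := by
  obtain ⟨t, rfl⟩ : ∃ t, x = (1 + t) / 2 := ⟨2 * x - 1, by ring⟩
  rw [show 2 * ((1 + t) / 2) = 1 + t by ring, show 2 - (1 + t) = 1 + -t by ring,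
    ← w1_swap q₂ q₃, w1_one_add, w1_one_add, w1_one_add, w1_one_add, uplus_neg, uplus_neg,
    uminus_neg, uminus_neg]
  simp only [uplus, uminus]
  ring

lemma ae_eq_restrict_Ioo_of_w_ae_eq {q₂ q₃ r₂ r₃ : ℝ → ℂ}
    (h₁ : w1 q₂ q₃ =ᵐ[volume.restrict (Ioo 0 2)] w1 r₂ r₃)
    (h₂ : w2 q₂ q₃ =ᵐ[volume.restrict (Ioo 0 2)] w2 r₂ r₃) :
    q₂ =ᵐ[volume.restrict (Ioo 0 1)] r₂ := by
  rw [EventuallyEq, ae_restrict_iff' measurableSet_Ioo] at h₁ h₂ ⊢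
  have h : ∀ᵐ y, y ∈ Ioo (0 : ℝ) 2 → w1 q₂ q₃ y = w1 r₂ r₃ y ∧ w2 q₂ q₃ y = w2 r₂ r₃ y := by
    filter_upwards [h₁, h₂] with y hy₁ hy₂ hy using ⟨hy₁ hy, hy₂ hy⟩
  have hdouble : Measure.QuasiMeasurePreserving (fun x : ℝ => 2 * x) :=
    Measure.quasiMeasurePreserving_smul volume two_ne_zero
  have hreflect : Measure.QuasiMeasurePreserving (fun x : ℝ => 2 - 2 * x) :=
    (Measure.measurePreserving_sub_left volume 2).quasiMeasurePreserving.comp hdouble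
  filter_upwards [hdouble.ae h, hreflect.ae h] with x hx₁ hx₂ ⟨hx0, hx1⟩
  obtain ⟨e₁, e₂⟩ := hx₁ ⟨by linarith, by linarith⟩
  obtain ⟨e₃, e₄⟩ := hx₂ ⟨by linarith, by linarith⟩
  rw [apply_eq_w_combination q₂ q₃, apply_eq_w_combination r₂ r₃, e₁, e₂, e₃, e₄]

end Reconstruction

theorem stmt18 :
    (∀ q₂ q₃ : ℝ → ℂ,
      MemLp q₂ 2 (volume.restrict (Set.Ioo (0 : ℝ) 1)) →
      MemLp q₃ 2 (volume.restrict (Set.Ioo (0 : ℝ) 1)) →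
      ∀ᵐ x ∂volume, x ∈ Set.Ioo (0 : ℝ) 1 →
        (q₂ x = 2 * (w1 q₂ q₃ (2 * x) - w2 q₂ q₃ (2 * x))
            + 2 * (w1 q₂ q₃ (2 - 2 * x) + w2 q₂ q₃ (2 - 2 * x)) ∧
         q₃ x = 2 * (w2 q₂ q₃ (2 * x) - w1 q₂ q₃ (2 * x))
            + 2 * (w1 q₂ q₃ (2 - 2 * x) + w2 q₂ q₃ (2 - 2 * x)))) ∧
    (∀ q₂ q₃ r₂ r₃ : ℝ → ℂ,
      MemLp q₂ 2 (volume.restrict (Set.Ioo (0 : ℝ) 1)) →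
      MemLp q₃ 2 (volume.restrict (Set.Ioo (0 : ℝ) 1)) →
      MemLp r₂ 2 (volume.restrict (Set.Ioo (0 : ℝ) 1)) →
      MemLp r₃ 2 (volume.restrict (Set.Ioo (0 : ℝ) 1)) →
      w1 q₂ q₃ =ᵐ[volume.restrict (Set.Ioo (0 : ℝ) 2)] w1 r₂ r₃ →
      w2 q₂ q₃ =ᵐ[volume.restrict (Set.Ioo (0 : ℝ) 2)] w2 r₂ r₃ →
      q₂ =ᵐ[volume.restrict (Set.Ioo (0 : ℝ) 1)] r₂ ∧
      q₃ =ᵐ[volume.restrict (Set.Ioo (0 : ℝ) 1)] r₃) := by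
  refine ⟨fun q₂ q₃ _ _ => Eventually.of_forall fun x _ => ⟨?_, ?_⟩,
    fun q₂ q₃ r₂ r₃ _ _ _ _ h₁ h₂ => ⟨?_, ?_⟩⟩
  · exact apply_eq_w_combination q₂ q₃ x
  · have h := apply_eq_w_combination q₃ q₂ x
    rw [w1_swap q₂ q₃, w2_swap q₂ q₃] at h
    rw [h, add_comm (w2 q₂ q₃ _)]
  · exact ae_eq_restrict_Ioo_of_w_ae_eq h₁ h₂
  · exact ae_eq_restrict_Ioo_of_w_ae_eq (q₂ := q₃) h₂ h₁
end
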